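/- For positive integers k and n, the sum of mex(π)^k over partitions π of n with mex(π) odd equals Σ_{m≥0} (δ_m (m+1)^k − (1−δ_m) m^k) p(n − m(m+1)/2), where δ_m = 1 if m is even and 0 if m is odd, and p(j)=0 for j<0. -/

import Mathlib

open Finset

/-- The minimal excludant of a partition: the least positive integer not a part. -/
noncomputable def mex {n : ℕ} (π : Nat.Partition n) : ℕ :=
  sInf {m : ℕ | 0 < m ∧ m ∉ π.parts}

/-- Number of partitions of `n` with minimal excludant `m`. -/
noncomputable def pmex (m n : ℕ) : ℕ :=
  ((Finset.univ : Finset (Nat.Partition n)).filter (fun π => mex π = m)).card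

/-- The partition function, extended by `0` on negative integers. -/
noncomputable def pz (k : ℤ) : ℕ := if 0 ≤ k then Fintype.card (Nat.Partition k.toNat) else 0

/-- Number of partitions of `m` into distinct parts. -/
def qdist (m : ℕ) : ℕ := (Nat.Partition.distincts m).card

/-- A two-colored distinct-parts partition of `n`: a set of distinct (part, color)
pairs with positive parts summing to `n`. -/
def IsTCD (n : ℕ) (s : Finset (ℕ × Fin 2)) : Prop :=
  (∀ p ∈ s, 0 < p.1) ∧ ∑ p ∈ s, p.1 = n

noncomputable def D2 (n : ℕ) : ℕ := Set.ncard {s : Finset (ℕ × Fin 2) | IsTCD n s}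
noncomputable def D2e (n : ℕ) : ℕ :=
  Set.ncard {s : Finset (ℕ × Fin 2) | IsTCD n s ∧ Even s.card}
noncomputable def D2o (n : ℕ) : ℕ :=
  Set.ncard {s : Finset (ℕ × Fin 2) | IsTCD n s ∧ Odd s.card}

/-!
A partition `π` of `n` has `m < mex π` exactly when it contains the parts `1, …, m`; removing them
shows that there are `p(n - m(m+1)/2)` such partitions. For any weight `f`, write
`f (mex π) - f 0` as the telescoping sum of `f (m + 1) - f m` over `m < mex π` and exchange the
order of summation. With `f m = m ^ k` for odd `m` and `0` for even `m`, the increment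
`f (m + 1) - f m` is `(m + 1) ^ k` for even `m` and `-m ^ k` for odd `m`.
-/

namespace Nat.Partition

theorem add_one_notMem_parts {n : ℕ} (π : Nat.Partition n) : n + 1 ∉ π.parts :=
  fun h => by have := π.le_of_mem_parts h; omega

theorem sum_add_sum_parts_sub {n : ℕ} (π : Nat.Partition n) {s : Multiset ℕ} (hs : s ≤ π.parts) :
    s.sum + (π.parts - s).sum = n := by
  rw [← Multiset.sum_add, add_tsub_cancel_of_le hs, π.parts_sum]

def subtypeLePartsEquiv (s : Multiset ℕ) (hs : ∀ i ∈ s, 0 < i) {n : ℕ} (hn : s.sum ≤ n) :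
    {π : Nat.Partition n // s ≤ π.parts} ≃ Nat.Partition (n - s.sum) where
  toFun π :=
    { parts := π.1.parts - s
      parts_pos := fun hi => π.1.parts_pos (Multiset.mem_of_le (Multiset.sub_le_self _ _) hi)
      parts_sum := by have := π.1.sum_add_sum_parts_sub π.2; omega }
  invFun σ :=
    ⟨{ parts := σ.parts + s
       parts_pos := fun hi => (Multiset.mem_add.mp hi).elim σ.parts_pos (hs _)
       parts_sum := by rw [Multiset.sum_add, σ.parts_sum]; omega },
     Multiset.le_add_left _ _⟩
  left_inv π := Subtype.ext <| Nat.Partition.ext <| tsub_add_cancel_of_le π.2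
  right_inv σ := Nat.Partition.ext <| add_tsub_cancel_right _ _

theorem card_filter_le_parts (s : Multiset ℕ) (hs : ∀ i ∈ s, 0 < i) (n : ℕ) :
    #{π : Nat.Partition n | s ≤ π.parts} = pz ((n : ℤ) - s.sum) := by
  rw [← Fintype.card_subtype]
  by_cases hn : s.sum ≤ n
  · rw [Fintype.card_congr (subtypeLePartsEquiv s hs hn), pz, if_pos (by omega),
      show ((n : ℤ) - s.sum).toNat = n - s.sum by omega]
  · rw [pz, if_neg (by omega), Fintype.card_eq_zero_iff]
    exact ⟨fun π => hn (by have := π.1.sum_add_sum_parts_sub π.2; omega)⟩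

end Nat.Partition

theorem sum_Icc_one_id (m : ℕ) : ∑ i ∈ Icc 1 m, i = m * (m + 1) / 2 := by
  have h := Finset.sum_range_id (m + 1)
  rw [range_eq_Ico, sum_eq_sum_Ico_succ_bot (by omega), Ico_add_one_right_eq_Icc] at h
  simpa [mul_comm] using h

section mex

variable {n : ℕ} (π : Nat.Partition n)

theorem mex_le : mex π ≤ n + 1 :=
  Nat.sInf_le ⟨n.succ_pos, π.add_one_notMem_parts⟩

theorem lt_mex_iff {m : ℕ} : m < mex π ↔ (Icc 1 m).val ≤ π.parts := by
  rw [Multiset.le_iff_subset (Icc 1 m).nodup]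
  constructor
  · intro hm i hi
    have hi := mem_Icc.mp (mem_val.mp hi)
    by_contra hπ
    exact Nat.notMem_of_lt_sInf (show i < mex π by omega) ⟨by omega, hπ⟩
  · intro hsub
    by_contra! hle
    obtain ⟨hpos, hmex⟩ : 0 < mex π ∧ mex π ∉ π.parts :=
      Nat.sInf_mem (s := {m | 0 < m ∧ m ∉ π.parts}) ⟨n + 1, n.succ_pos, π.add_one_notMem_parts⟩
    exact hmex (hsub (mem_val.mpr (mem_Icc.mpr ⟨hpos, hle⟩)))

end mex

theorem card_filter_lt_mex (n m : ℕ) :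
    #{π : Nat.Partition n | m < mex π} = pz ((n : ℤ) - (m * (m + 1) / 2 : ℕ)) := by
  rw [filter_congr fun π _ => lt_mex_iff π,
    Nat.Partition.card_filter_le_parts _ (fun i hi => (mem_Icc.mp (mem_val.mp hi)).1),
    sum_val, ← sum_Icc_one_id]
  rfl

theorem sum_apply_mex_sub_apply_zero {R : Type*} [Ring R] (f : ℕ → R) (n : ℕ) :
    ∑ π : Nat.Partition n, (f (mex π) - f 0) =
      ∑ m ∈ range (n + 1), (f (m + 1) - f m) * pz ((n : ℤ) - (m * (m + 1) / 2 : ℕ)) := by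
  have htelescope : ∀ π : Nat.Partition n,
      f (mex π) - f 0 = ∑ m ∈ range (n + 1), if m < mex π then f (m + 1) - f m else 0 := by
    intro π
    rw [← sum_filter, ← sum_range_sub]
    congr 1
    ext m
    simp only [mem_filter, mem_range]
    have := mex_le π
    omega
  simp_rw [htelescope]
  rw [sum_comm]
  refine sum_congr rfl fun m _ => ?_
  rw [sum_ite, sum_const, sum_const_zero, add_zero, card_filter_lt_mex, nsmul_eq_mul']

theorem kth_moment_odd_mex_general (k n : ℕ) :
    ∑ π ∈ Finset.univ.filter (fun π : Nat.Partition n => Odd (mex π)),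
        (mex π : ℤ) ^ k =
      ∑ m ∈ Finset.range (n + 1),
        ((if Even m then (1 : ℤ) else 0) * (m + 1) ^ k -
          (1 - if Even m then (1 : ℤ) else 0) * m ^ k) *
          pz ((n : ℤ) - (m * (m + 1) / 2 : ℕ)) := by
  set f : ℕ → ℤ := fun m => if Odd m then (m : ℤ) ^ k else 0
  have hLHS : ∑ π ∈ Finset.univ.filter (fun π : Nat.Partition n => Odd (mex π)), (mex π : ℤ) ^ k =
      ∑ π : Nat.Partition n, (f (mex π) - f 0) := by
    simp [f, sum_filter]
  rw [hLHS, sum_apply_mex_sub_apply_zero]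
  refine sum_congr rfl fun m _ => ?_
  congr 1
  by_cases h : Even m <;> simp [f, h, ← Nat.not_even_iff_odd, Nat.even_add_one]

theorem kth_moment_odd_mex (k n : ℕ) (hk : 0 < k) (hn : 0 < n) :
    ∑ π ∈ Finset.univ.filter (fun π : Nat.Partition n => Odd (mex π)),
        (mex π : ℤ) ^ k =
      ∑ m ∈ Finset.range (n + 1),
        ((if Even m then (1 : ℤ) else 0) * (m + 1) ^ k -
          (1 - if Even m then (1 : ℤ) else 0) * m ^ k) *
          pz ((n : ℤ) - (m * (m + 1) / 2 : ℕ)) :=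
  kth_moment_odd_mex_general k n
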